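/- For any distinct i, j ∈ I, the sets X_{L_{ij}} = {{i,j},{i,i∗j},{j,i∗j}}, X_{L_{ij}}^C = { {i',j'} ∈ X : i',j' ∉ {i,j,i∗j} }, X_{(i)} = { {i,ℓ} : ℓ ∈ I, ℓ ≠ i }, X^{(i)} = { {i',j'} ∈ X : i'∗j' = i }, and all their subsets, are nice sets. -/

import Mathlib

abbrev GG : Type := ZMod 2 × ZMod 2 × ZMod 2

def X : Finset (Sym2 GG) :=
  ((Finset.univ : Finset (GG × GG)).filter
    fun q => q.1 ≠ q.2 ∧ q.1 ≠ 0 ∧ q.2 ≠ 0).image fun q => s(q.1, q.2)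

def Generative (a b c : GG) : Prop :=
  a ≠ 0 ∧ b ≠ 0 ∧ c ≠ 0 ∧ a ≠ b ∧ a ≠ c ∧ b ≠ c ∧ c ≠ a + b

def Pset (a b c : GG) : Finset (Sym2 GG) :=
  {s(a, b), s(b, c), s(c, a), s(a, b + c), s(b, c + a), s(c, a + b)}

def IsNice (T : Finset (Sym2 GG)) : Prop :=
  T ⊆ X ∧ ∀ a b c : GG, Generative a b c →
    s(a, b) ∈ T → s(a + b, c) ∈ T → Pset a b c ⊆ T

/-- `X_{L_{ij}}`: the three edges within the line `{i, j, i∗j}`. -/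
def XL (i j : GG) : Finset (Sym2 GG) := {s(i, j), s(i, i + j), s(j, i + j)}

/-- `X_{L_{ij}}^C`: edges disjoint from the line `{i, j, i∗j}`. -/
def XLC (i j : GG) : Finset (Sym2 GG) :=
  X.filter fun p => ∀ x ∈ p, x ≠ i ∧ x ≠ j ∧ x ≠ i + j

/-- `X_{(i)}`: edges through the point `i`. -/
def Xpoint (i : GG) : Finset (Sym2 GG) := X.filter fun p => i ∈ p

/-- `X^{(i)}`: edges `{i', j'}` with `i'∗j' = i`. -/
def Xstar (i : GG) : Finset (Sym2 GG) :=
  X.filter fun p => Sym2.lift ⟨fun a b => a + b, fun a b => add_comm a b⟩ p = i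

/-!
None of the four sets contains a pair of edges `{a, b}`, `{a∗b, c}` with `{a, b, c}` generative,
so the closure condition defining niceness holds vacuously, for the set and for all its subsets.
In `X_{L_{ij}}` such a pair would put three distinct points `a, b, c` on `L_{ij}`, forcing
`c = a∗b`; in `X_{L_{ij}}^C` the line `{a, b, a∗b}` would miss `L_{ij}`, but any two lines of
the Fano plane meet; in `X_{(i)}` the point `i` would lie in `{a, b} ∩ {a∗b, c} = ∅`; and in
`X^{(i)}` we would have `a∗b = i = (a∗b)∗c`, forcing `c = 0`.
-/

def HasNoGenerativePair (T : Finset (Sym2 GG)) : Prop :=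
  ∀ ⦃a b c : GG⦄, Generative a b c → s(a, b) ∈ T → s(a + b, c) ∉ T

lemma HasNoGenerativePair.mono {S T : Finset (Sym2 GG)} (hS : HasNoGenerativePair S)
    (hTS : T ⊆ S) : HasNoGenerativePair T :=
  fun _ _ _ hg hab hc => hS hg (hTS hab) (hTS hc)

lemma HasNoGenerativePair.isNice {T : Finset (Sym2 GG)} (hT : HasNoGenerativePair T)
    (hTX : T ⊆ X) : IsNice T :=
  ⟨hTX, fun _ _ _ hg hab hc => (hT hg hab hc).elim⟩

/-- The line `L_{ij} = {i, j, i∗j}` of the Fano plane. -/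
def line (i j : GG) : Finset GG := {i, j, i + j}

lemma mem_line {i j x : GG} : x ∈ line i j ↔ x = i ∨ x = j ∨ x = i + j := by
  simp [line]

lemma eq_add_of_mem_line {i j x y z : GG} (hx : x ∈ line i j) (hy : y ∈ line i j)
    (hz : z ∈ line i j) (hxy : x ≠ y) (hxz : x ≠ z) (hyz : y ≠ z) : z = x + y := by
  rw [mem_line] at hx hy hz
  rcases hx with rfl | rfl | rfl <;> rcases hy with rfl | rfl | rfl <;>
    rcases hz with rfl | rfl | rfl <;>
    first | contradiction | ring_nf <;> simp [CharTwo.two_eq_zero (R := GG)]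

set_option synthInstance.maxSize 1024 in
theorem line_inter_line_nonempty {i j a b : GG} (hi : i ≠ 0) (hj : j ≠ 0) (hij : i ≠ j)
    (ha : a ≠ 0) (hb : b ≠ 0) (hab : a ≠ b) : (line i j ∩ line a b).Nonempty := by
  revert i j a b
  decide

lemma mk_mem_X {x y : GG} (hxy : x ≠ y) (hx : x ≠ 0) (hy : y ≠ 0) : s(x, y) ∈ X :=
  Finset.mem_image.2 ⟨(x, y), by simp [hxy, hx, hy], rfl⟩

lemma XL_subset_X {i j : GG} (hi : i ≠ 0) (hj : j ≠ 0) (hij : i ≠ j) : XL i j ⊆ X := by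
  have hij' : i + j ≠ 0 := CharTwo.add_eq_zero.not.2 hij
  simp only [XL, Finset.insert_subset_iff, Finset.singleton_subset_iff]
  refine ⟨mk_mem_X hij hi hj, mk_mem_X ?_ hi hij', mk_mem_X ?_ hj hij'⟩
  · simpa using hj
  · simpa using hi

lemma mem_line_of_mem_XL {i j x : GG} {p : Sym2 GG} (hp : p ∈ XL i j) (hx : x ∈ p) :
    x ∈ line i j := by
  simp only [XL, Finset.mem_insert, Finset.mem_singleton] at hp
  rw [mem_line]
  rcases hp with rfl | rfl | rfl <;> rw [Sym2.mem_iff] at hx <;> tauto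

lemma notMem_line_of_mem_XLC {i j x : GG} {p : Sym2 GG} (hp : p ∈ XLC i j) (hx : x ∈ p) :
    x ∉ line i j := by
  obtain ⟨hi, hj, hij⟩ := (Finset.mem_filter.1 hp).2 x hx
  simp [mem_line, hi, hj, hij]

lemma hasNoGenerativePair_XL (i j : GG) : HasNoGenerativePair (XL i j) := by
  rintro a b c ⟨-, -, -, hab, hac, hbc, hcab⟩ h₁ h₂
  exact hcab <| eq_add_of_mem_line (mem_line_of_mem_XL h₁ (Sym2.mem_mk_left a b))
    (mem_line_of_mem_XL h₁ (Sym2.mem_mk_right a b))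
    (mem_line_of_mem_XL h₂ (Sym2.mem_mk_right _ c)) hab hac hbc

lemma hasNoGenerativePair_XLC {i j : GG} (hi : i ≠ 0) (hj : j ≠ 0) (hij : i ≠ j) :
    HasNoGenerativePair (XLC i j) := by
  rintro a b c ⟨ha, hb, -, hab, -, -, -⟩ h₁ h₂
  obtain ⟨x, hx⟩ := line_inter_line_nonempty hi hj hij ha hb hab
  obtain ⟨hxij, hxab⟩ := Finset.mem_inter.1 hx
  rcases mem_line.1 hxab with rfl | rfl | rfl
  · exact notMem_line_of_mem_XLC h₁ (Sym2.mem_mk_left _ b) hxij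
  · exact notMem_line_of_mem_XLC h₁ (Sym2.mem_mk_right a _) hxij
  · exact notMem_line_of_mem_XLC h₂ (Sym2.mem_mk_left _ c) hxij

lemma hasNoGenerativePair_Xpoint (i : GG) : HasNoGenerativePair (Xpoint i) := by
  rintro a b c ⟨ha, hb, -, -, hac, hbc, -⟩ h₁ h₂
  have hi₁ := Sym2.mem_iff.1 (Finset.mem_filter.1 h₁).2
  have hi₂ := Sym2.mem_iff.1 (Finset.mem_filter.1 h₂).2
  rcases hi₁ with rfl | rfl <;> rcases hi₂ with h | rfl
  · exact hb (by simpa using h)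
  · exact hac rfl
  · exact ha (by simpa using h)
  · exact hbc rfl

lemma hasNoGenerativePair_Xstar (i : GG) : HasNoGenerativePair (Xstar i) := by
  rintro a b c ⟨-, -, hc, -, -, -, -⟩ h₁ h₂
  simp only [Xstar, Finset.mem_filter, Sym2.lift_mk] at h₁ h₂
  exact hc (by simpa [h₁.2] using h₂.2)

/-- `X_{L_{ij}}`, `X_{L_{ij}}^C`, `X_{(i)}`, `X^{(i)}` and all their
subsets are nice sets. -/
theorem special_subsets_isNice (i j : GG) (hi : i ≠ 0) (hj : j ≠ 0) (hij : i ≠ j)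
    (T : Finset (Sym2 GG))
    (hT : T ⊆ XL i j ∨ T ⊆ XLC i j ∨ T ⊆ Xpoint i ∨ T ⊆ Xstar i) :
    IsNice T := by
  obtain ⟨S, hSX, hS, hTS⟩ : ∃ S, S ⊆ X ∧ HasNoGenerativePair S ∧ T ⊆ S := by
    rcases hT with hT | hT | hT | hT
    · exact ⟨_, XL_subset_X hi hj hij, hasNoGenerativePair_XL i j, hT⟩
    · exact ⟨_, Finset.filter_subset _ _, hasNoGenerativePair_XLC hi hj hij, hT⟩
    · exact ⟨_, Finset.filter_subset _ _, hasNoGenerativePair_Xpoint i, hT⟩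
    · exact ⟨_, Finset.filter_subset _ _, hasNoGenerativePair_Xstar i, hT⟩
  exact (hS.mono hTS).isNice (hTS.trans hSX)
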